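/- arXiv:1512.04637 — 2 statements merged into one kernel-verified Lean document; each statement's English description precedes it below -/
import Mathlib

section
/- Let M ∈ 𝔐(m) with extended net-trade function ν, and let v,w ∈ ℝ₊^m. Then the following are equivalent: (1) there is an a ∈ S_P(v) such that v + ν(a,b) ∈ ⟨w⟩ for SOME b ∈ S₊; (2) there is an a ∈ S_P(v) such that v + ν(a,b) ∈ ⟨w⟩ for ALL b ∈ S₊; (3) for each u ∈ ⟨v⟩ there is an a ∈ S_P(u) such that u + ν(a,b) ∈ ⟨w⟩ for all b ∈ S₊. -/
open Finset

/-- `v` and `w` have the same componentwise sign pattern `(+,−,0)`, i.e. `v ∈ ⟨w⟩`. -/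
def SameSign {m : ℕ} (v w : Fin m → ℝ) : Prop :=
  ∀ i, (0 < v i ↔ 0 < w i) ∧ (v i < 0 ↔ w i < 0)

/-- An (abstract) exchange mechanism on the commodity set `{1,…,m}` (modelled as `Fin m`):
a finite index set `K = K₁ ⊔ ⋯ ⊔ K_m` (an index `h` belongs to `K_i` iff `ind h = i`),
together with, for every number `n` of traders, a return map `rho n`. -/
structure ExchangeMechanism (m : ℕ) where
  K : Type
  fintypeK : Fintype K
  decEqK : DecidableEq K
  ind : K → Fin m
  rho : (n : ℕ) → (Fin n → K → ℝ) → Fin n → Fin m → ℝ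

namespace ExchangeMechanism

variable {m : ℕ} (M : ExchangeMechanism m)

instance : Fintype M.K := M.fintypeK
instance : DecidableEq M.K := M.decEqK

/-- `a ∈ S = ℝ₊^K`. -/
def Nonneg (a : M.K → ℝ) : Prop := ∀ h, 0 ≤ a h

/-- `b ∈ S₊ = ℝ₊₊^K`. -/
def Pos (b : M.K → ℝ) : Prop := ∀ h, 0 < b h

/-- `(a¹,…,aⁿ) ∈ S(n)`: an admissible tuple of offers (nonnegative, positive in aggregate). -/
def Valid (n : ℕ) (a : Fin n → M.K → ℝ) : Prop :=
  (∀ k, M.Nonneg (a k)) ∧ M.Pos (∑ k, a k)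

/-- The aggregate `ā ∈ C = ℝ₊^m` of an offer `a`, `ā_i = Σ_{h ∈ K_i} a_h`. -/
def agg (a : M.K → ℝ) : Fin m → ℝ :=
  fun i => ∑ h ∈ Finset.univ.filter (fun h => M.ind h = i), a h

/-- Conservation of commodities: everything received is redistributed. -/
def Conserves : Prop :=
  ∀ n (a : Fin n → M.K → ℝ), M.Valid n a →
    ∑ k, M.rho n a k = ∑ k, M.agg (a k)

/-- Anonymity. -/
def Anonymous : Prop :=
  ∀ n (a : Fin n → M.K → ℝ) (σ : Equiv.Perm (Fin n)), M.Valid n a →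
    M.rho n (a ∘ σ) = (M.rho n a) ∘ σ

/-- Aggregation: merging the last two offers merges the last two returns. -/
def Aggregative : Prop :=
  ∀ n (a : Fin (n + 2) → M.K → ℝ), M.Valid (n + 2) a →
    M.rho (n + 1)
      (Fin.snoc (fun k : Fin n => a k.castSucc.castSucc)
        (a (Fin.castSucc (Fin.last n)) + a (Fin.last (n + 1)))) =
      Fin.snoc (fun k : Fin n => M.rho (n + 2) a k.castSucc.castSucc)
        (M.rho (n + 2) a (Fin.castSucc (Fin.last n)) + M.rho (n + 2) a (Fin.last (n + 1)))

/-- The scaling action `(λ ∗ a)_h = λ_{i} a_h` for `h ∈ K_i` on offers. -/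
def scaleS (lam : Fin m → ℝ) (a : M.K → ℝ) : M.K → ℝ := fun h => lam (M.ind h) * a h

/-- Invariance under change of units. -/
def Invariant : Prop :=
  ∀ n (a : Fin n → M.K → ℝ) (lam : Fin m → ℝ), (∀ i, 0 < lam i) → M.Valid n a →
    M.rho n (fun k => M.scaleS lam (a k)) = fun k i => lam i * M.rho n a k i

/-- Non-dissipation: each net return `rᵏ − āᵏ` is `0` or has a strictly positive component. -/
def NonDissipative : Prop :=
  ∀ n (a : Fin n → M.K → ℝ), M.Valid n a → ∀ k,
    M.rho n a k = M.agg (a k) ∨ ∃ i, M.agg (a k) i < M.rho n a k i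

/-- The two-trader return `ρ(a, b)`: the first component of `ρ²`. -/
def ret (a b : M.K → ℝ) : Fin m → ℝ := M.rho 2 ![a, b] 0

/-- The unit offer `e_h`. -/
def unit (h : M.K) : M.K → ℝ := Pi.single h 1

/-- `h ∈ K_i` is an `ij`-index: some offer of the others yields a positive return of `j`. -/
def IsIJIndex (i j : Fin m) (h : M.K) : Prop :=
  M.ind h = i ∧ ∃ a, M.Valid 2 ![M.unit h, a] ∧ 0 < M.ret (M.unit h) a j

/-- A pure `ij`-index: the return to `e_h` is always exclusively in commodity `j`. -/
def IsPureIJIndex (i j : Fin m) (h : M.K) : Prop :=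
  M.IsIJIndex i j h ∧
    ∀ a, M.Valid 2 ![M.unit h, a] → ∀ k, k ≠ j → M.ret (M.unit h) a k = 0

/-- Flexibility: whenever there is an `ij`-index there is a pure `ij`-index. -/
def Flexible : Prop :=
  ∀ i j : Fin m, (∃ h, M.IsIJIndex i j h) → ∃ h, M.IsPureIJIndex i j h

/-- The trade function `r(a,b) = ρ(a, b − a)` (for `a ≤ b`, `b ∈ S₊`). -/
def trade (a b : M.K → ℝ) : Fin m → ℝ := M.ret a (b - a)

/-- The net-trade function `ν(a,b) = r(a,b) − ā` (for `a ≤ b`, `b ∈ S₊`). -/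
def nu (a b : M.K → ℝ) : Fin m → ℝ := M.trade a b - M.agg a

/-- `nu'` is an extension of the net-trade function `ν` to all of `S × S₊` which is
homogeneous of degree 1 in the offer and of degree 0 in the market state. -/
def IsNuExtension (nu' : (M.K → ℝ) → (M.K → ℝ) → Fin m → ℝ) : Prop :=
  (∀ a b, M.Nonneg a → M.Pos b → a ≤ b → nu' a b = M.nu a b) ∧
  (∀ a b (t : ℝ), M.Nonneg a → M.Pos b → 0 < t → nu' (t • a) b = t • nu' a b) ∧
  (∀ a b (t : ℝ), M.Nonneg a → M.Pos b → 0 < t → nu' a (t • b) = nu' a b)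


/-- `v → w`: the bundle `v` can be converted to `w` (relative to the extended
net-trade function `nu'`). -/
def Converts (nu' : (M.K → ℝ) → (M.K → ℝ) → Fin m → ℝ) (v w : Fin m → ℝ) : Prop :=
  ∃ a b, M.Nonneg a ∧ M.Pos b ∧ M.agg a ≤ v ∧ w = v + nu' a b

/-- `v` can be converted to `w` in exactly `t` steps. -/
def ConvertsIn (nu' : (M.K → ℝ) → (M.K → ℝ) → Fin m → ℝ) (t : ℕ)
    (v w : Fin m → ℝ) : Prop :=
  ∃ f : Fin (t + 1) → Fin m → ℝ, f 0 = v ∧ f (Fin.last t) = w ∧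
    ∀ k : Fin t, M.Converts nu' (f k.castSucc) (f k.succ)

/-- Connectedness: each `e_i` converts to each `e_j` in finitely many steps,
i.e. `τ(M) < ∞`. -/
def Connected (nu' : (M.K → ℝ) → (M.K → ℝ) → Fin m → ℝ) : Prop :=
  ∀ i j : Fin m, i ≠ j →
    ∃ t : ℕ, M.ConvertsIn nu' t (Pi.single i 1) (Pi.single j 1)

/-- `M ∈ 𝔐(m)` (relative to a chosen extension `nu'` of its net-trade function):
`M` is connected and satisfies Anonymity, Aggregation, Invariance, Non-dissipation
and Flexibility. -/
def MemM (nu' : (M.K → ℝ) → (M.K → ℝ) → Fin m → ℝ) : Prop :=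
  M.Conserves ∧ M.Anonymous ∧ M.Aggregative ∧ M.Invariant ∧ M.NonDissipative ∧
    M.Flexible ∧ M.IsNuExtension nu' ∧ M.Connected nu'


/-- `P ⊆ K` contains exactly one pure `ij`-index for each ordered pair `(i,j)` for which
`M` has a pure `ij`-index, and nothing else. -/
def IsPureSelection (P : Set M.K) : Prop :=
  (∀ h ∈ P, ∃ i j, M.IsPureIJIndex i j h) ∧
    ∀ i j : Fin m, (∃ h, M.IsPureIJIndex i j h) →
      ∃! h, h ∈ P ∧ M.IsPureIJIndex i j h

/-- `a ∈ S_P`: a nonnegative offer supported on `P`. -/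
def SPoffer (P : Set M.K) (a : M.K → ℝ) : Prop :=
  M.Nonneg a ∧ ∀ h ∉ P, a h = 0

/-- `a ∈ S_P(v)`: a `P`-offer subordinate to `v`. -/
def SPofferLe (P : Set M.K) (v : Fin m → ℝ) (a : M.K → ℝ) : Prop :=
  M.SPoffer P a ∧ M.agg a ≤ v

end ExchangeMechanism

/-!
Fix `a ∈ S_P(v)` and a market state `b`, and rescale `b` (which does not change `ν'`) so that it
dominates `a`. By Aggregation and Anonymity the trade `r(a, b)` is additive in the offer, so it
splits into the trades of the single offers `a_h e_h`. For a pure `ij`-index `h`, purity and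
Invariance make the trade of `a_h e_h` vanish off `j`, and Non-dissipation makes it positive
at `j`. Hence `v + ν(a, b) = (v - ā) + r(a, b) ≥ 0`, and its `l`-th component is positive iff
`ā_l < v_l` or `a_h > 0` for some pure `il`-index `h`: the sign pattern does not depend on `b`,
which is (1) ⇔ (2). For (2) ⇒ (3) write `u = λ v` with `λ > 0` and replace `a` by `λ ∗ a`,
using `ν'(λ ∗ a, λ ∗ b) = λ ν'(a, b)` (Invariance).
-/

namespace SameSign

variable {m : ℕ}

protected lemma refl (v : Fin m → ℝ) : SameSign v v := fun _ => ⟨Iff.rfl, Iff.rfl⟩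

protected lemma trans {u v w : Fin m → ℝ} (huv : SameSign u v) (hvw : SameSign v w) :
    SameSign u w :=
  fun i => ⟨(huv i).1.trans (hvw i).1, (huv i).2.trans (hvw i).2⟩

lemma of_nonneg {u v : Fin m → ℝ} (hu : ∀ i, 0 ≤ u i) (hv : ∀ i, 0 ≤ v i)
    (huv : ∀ i, 0 < u i ↔ 0 < v i) : SameSign u v :=
  fun i => ⟨huv i, iff_of_false (hu i).not_gt (hv i).not_gt⟩

lemma mul_left {lam : Fin m → ℝ} (hlam : ∀ i, 0 < lam i) (v : Fin m → ℝ) :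
    SameSign (lam * v) v :=
  fun i => ⟨mul_pos_iff_of_pos_left (hlam i), smul_neg_iff_of_pos_left (hlam i)⟩

lemma exists_pos_mul {u v : Fin m → ℝ} (huv : SameSign u v) :
    ∃ lam : Fin m → ℝ, (∀ i, 0 < lam i) ∧ u = lam * v := by
  refine ⟨fun i => if v i = 0 then 1 else u i / v i, fun i => ?_, funext fun i => ?_⟩
  · dsimp only
    split_ifs with hv
    · exact one_pos
    · rcases lt_or_gt_of_ne hv with hneg | hpos
      · exact div_pos_of_neg_of_neg ((huv i).2.2 hneg) hneg
      · exact div_pos ((huv i).1.2 hpos) hpos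
  · simp only [Pi.mul_apply]
    split_ifs with hv
    · have h1 := (huv i).1
      have h2 := (huv i).2
      rw [hv, lt_self_iff_false, iff_false, not_lt] at h1 h2
      linarith
    · exact (div_mul_cancel₀ _ hv).symm

end SameSign

namespace ExchangeMechanism

variable {m : ℕ} {M : ExchangeMechanism m}

lemma nonneg_iff_zero_le {a : M.K → ℝ} : M.Nonneg a ↔ 0 ≤ a := Iff.rfl

lemma Nonneg.add {x y : M.K → ℝ} (hx : M.Nonneg x) (hy : M.Nonneg y) : M.Nonneg (x + y) :=
  fun h => add_nonneg (hx h) (hy h)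

lemma nonneg_single (h : M.K) {t : ℝ} (ht : 0 ≤ t) : M.Nonneg (Pi.single h t) :=
  nonneg_iff_zero_le.2 (Pi.single_nonneg.2 ht)

lemma Pos.smul {b : M.K → ℝ} (hb : M.Pos b) {s : ℝ} (hs : 0 < s) : M.Pos (s • b) :=
  fun h => mul_pos hs (hb h)

lemma exists_le_smul {a b : M.K → ℝ} (ha : M.Nonneg a) (hb : M.Pos b) :
    ∃ s : ℝ, 0 < s ∧ a ≤ s • b := by
  have hq : ∀ h, 0 ≤ a h / b h := fun h => div_nonneg (ha h) (hb h).le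
  refine ⟨1 + ∑ h, a h / b h, by linarith [Finset.sum_nonneg fun g (_ : g ∈ univ) => hq g],
    fun h => ?_⟩
  have hle : a h / b h ≤ 1 + ∑ g, a g / b g := by
    linarith [Finset.single_le_sum (fun g _ => hq g) (Finset.mem_univ h)]
  calc a h = a h / b h * b h := (div_mul_cancel₀ _ (hb h).ne').symm
    _ ≤ (1 + ∑ g, a g / b g) * b h := mul_le_mul_of_nonneg_right hle (hb h).le

lemma agg_nonneg {a : M.K → ℝ} (ha : M.Nonneg a) (i : Fin m) : 0 ≤ M.agg a i :=
  Finset.sum_nonneg fun h _ => ha h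

lemma agg_zero : M.agg 0 = 0 := by
  funext i
  simp [agg]

lemma agg_single_self (h : M.K) (t : ℝ) : M.agg (Pi.single h t) (M.ind h) = t := by
  simp [agg, Pi.single_apply]

lemma valid_two {x y : M.K → ℝ} (hx : M.Nonneg x) (hy : M.Nonneg y) (hxy : M.Pos (x + y)) :
    M.Valid 2 ![x, y] := by
  refine ⟨fun k => ?_, by simpa [Fin.sum_univ_two] using hxy⟩
  fin_cases k <;> assumption

lemma valid_three {x y z : M.K → ℝ} (hx : M.Nonneg x) (hy : M.Nonneg y) (hz : M.Nonneg z)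
    (hxyz : M.Pos (x + y + z)) : M.Valid 3 ![x, y, z] := by
  refine ⟨fun k => ?_, by simpa [Fin.sum_univ_three] using hxyz⟩
  fin_cases k <;> assumption

lemma Anonymous.rho_apply (hA : M.Anonymous) {n : ℕ} {a b : Fin n → M.K → ℝ}
    (σ : Equiv.Perm (Fin n)) (ha : M.Valid n a) (hab : a ∘ σ = b) (k : Fin n) :
    M.rho n b k = M.rho n a (σ k) := by
  rw [← hab, hA n a σ ha, Function.comp_apply]

lemma Aggregative.rho_two (hAg : M.Aggregative) {x y z : M.K → ℝ}
    (hv : M.Valid 3 ![x, y, z]) :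
    M.rho 2 ![x, y + z] =
      ![M.rho 3 ![x, y, z] 0, M.rho 3 ![x, y, z] 1 + M.rho 3 ![x, y, z] 2] := by
  have h := hAg 1 ![x, y, z] hv
  convert h using 2 <;> funext k <;> fin_cases k <;> rfl

/-- All three returns are read off the three-trader market `(z, x, y)`: Aggregation merges two
of its traders, and Anonymity rotates them into place. -/
lemma ret_add_left (hA : M.Anonymous) (hAg : M.Aggregative) {x y z : M.K → ℝ}
    (hx : M.Nonneg x) (hy : M.Nonneg y) (hz : M.Nonneg z) (hxyz : M.Pos (x + y + z)) :
    M.ret (x + y) z = M.ret x (y + z) + M.ret y (z + x) := by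
  have hpos : ∀ {s : M.K → ℝ}, s = x + y + z → M.Pos s := fun h => h ▸ hxyz
  have hzxy : M.Valid 3 ![z, x, y] := valid_three hz hx hy (hpos (by abel))
  have hswap : M.ret (x + y) z = M.rho 2 ![z, x + y] 1 :=
    hA.rho_apply (Equiv.swap 0 1) (valid_two hz (hx.add hy) (hpos (by abel)))
      (by funext k; fin_cases k <;> rfl) 0
  have hxyz' : M.rho 3 ![x, y, z] 0 = M.rho 3 ![z, x, y] 1 :=
    hA.rho_apply (finRotate 3) hzxy (by funext k; fin_cases k <;> rfl) 0
  have hyzx' : M.rho 3 ![y, z, x] 0 = M.rho 3 ![z, x, y] 2 :=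
    hA.rho_apply (finRotate 3)⁻¹ hzxy (by funext k; fin_cases k <;> rfl) 0
  have hx_yz := congrFun (hAg.rho_two (valid_three hx hy hz hxyz)) 0
  have hy_zx := congrFun (hAg.rho_two (valid_three hy hz hx (hpos (by abel)))) 0
  have hz_xy := congrFun (hAg.rho_two hzxy) 1
  simp only [Matrix.cons_val_zero, Matrix.cons_val_one] at hx_yz hy_zx hz_xy
  rw [hswap, hz_xy, ← hxyz', ← hyzx', ← hx_yz, ← hy_zx]
  rfl

section trade

variable {nu' : (M.K → ℝ) → (M.K → ℝ) → Fin m → ℝ}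

lemma IsNuExtension.eq_nu_smul (hext : M.IsNuExtension nu') {a b : M.K → ℝ} (ha : M.Nonneg a)
    (hb : M.Pos b) {s : ℝ} (hs : 0 < s) (hab : a ≤ s • b) : nu' a b = M.nu a (s • b) := by
  rw [← hext.2.2 a b s ha hb hs]
  exact hext.1 a _ ha (hb.smul hs) hab

lemma IsNuExtension.trade_zero (hext : M.IsNuExtension nu') {B : M.K → ℝ} (hB : M.Pos B) :
    M.trade 0 B = 0 := by
  have hnn : M.Nonneg 0 := fun _ => le_rfl
  have h2 : nu' 0 B = (2 : ℝ) • nu' 0 B := by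
    simpa using hext.2.1 0 B 2 hnn hB two_pos
  have h0 : nu' 0 B = 0 := by
    funext l
    have := congrFun h2 l
    simp only [Pi.smul_apply, smul_eq_mul] at this
    simp only [Pi.zero_apply]
    linarith
  simpa [nu, agg_zero, h0] using (hext.1 0 B hnn hB fun h => (hB h).le).symm

lemma trade_add (hA : M.Anonymous) (hAg : M.Aggregative) {x y B : M.K → ℝ}
    (hx : M.Nonneg x) (hy : M.Nonneg y) (hB : M.Pos B) (hxyB : x + y ≤ B) :
    M.trade (x + y) B = M.trade x B + M.trade y B := by
  have h := ret_add_left hA hAg hx hy (z := B - (x + y)) (fun h => sub_nonneg.2 (hxyB h))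
    (by rwa [add_sub_cancel])
  rw [trade, h, trade, trade]
  congr 2 <;> abel

lemma trade_sum (hA : M.Anonymous) (hAg : M.Aggregative) (hext : M.IsNuExtension nu')
    {ι : Type*} (s : Finset ι) {x : ι → M.K → ℝ} (hx : ∀ i, M.Nonneg (x i))
    {B : M.K → ℝ} (hB : M.Pos B) (hsB : ∑ i ∈ s, x i ≤ B) :
    M.trade (∑ i ∈ s, x i) B = ∑ i ∈ s, M.trade (x i) B := by
  classical
  induction s using Finset.induction_on with
  | empty => simpa using hext.trade_zero hB
  | insert i s hi ih =>
    rw [Finset.sum_insert hi] at hsB ⊢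
    have hs : M.Nonneg (∑ j ∈ s, x j) :=
      nonneg_iff_zero_le.2 (Finset.sum_nonneg fun j _ => hx j)
    rw [trade_add hA hAg (hx i) hs hB hsB, ih ((le_add_of_nonneg_left (hx i)).trans hsB),
      Finset.sum_insert hi]

lemma trade_eq_sum_single (hA : M.Anonymous) (hAg : M.Aggregative)
    (hext : M.IsNuExtension nu') {a B : M.K → ℝ} (ha : M.Nonneg a) (hB : M.Pos B)
    (haB : a ≤ B) : M.trade a B = ∑ h, M.trade (Pi.single h (a h)) B := by
  conv_lhs => rw [← Finset.univ_sum_single a]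
  exact trade_sum hA hAg hext _ (fun h => nonneg_single h (ha h)) hB
    (by rwa [Finset.univ_sum_single])

end trade

section scaleS

variable {lam : Fin m → ℝ}

lemma Nonneg.scaleS (hlam : ∀ i, 0 ≤ lam i) {a : M.K → ℝ} (ha : M.Nonneg a) :
    M.Nonneg (M.scaleS lam a) :=
  fun h => mul_nonneg (hlam _) (ha h)

lemma Pos.scaleS (hlam : ∀ i, 0 < lam i) {b : M.K → ℝ} (hb : M.Pos b) :
    M.Pos (M.scaleS lam b) :=
  fun h => mul_pos (hlam _) (hb h)

lemma scaleS_mono (hlam : ∀ i, 0 ≤ lam i) {a b : M.K → ℝ} (hab : a ≤ b) :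
    M.scaleS lam a ≤ M.scaleS lam b :=
  fun h => mul_le_mul_of_nonneg_left (hab h) (hlam _)

lemma scaleS_sub (a b : M.K → ℝ) :
    M.scaleS lam (a - b) = M.scaleS lam a - M.scaleS lam b := by
  funext h
  simp only [scaleS, Pi.sub_apply, mul_sub]

lemma smul_scaleS (s : ℝ) (a : M.K → ℝ) : s • M.scaleS lam a = M.scaleS lam (s • a) := by
  funext h
  simp only [scaleS, Pi.smul_apply, smul_eq_mul]
  ring

lemma agg_scaleS (a : M.K → ℝ) : M.agg (M.scaleS lam a) = lam * M.agg a := by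
  funext i
  simp only [agg, scaleS, Pi.mul_apply, Finset.mul_sum]
  exact Finset.sum_congr rfl fun h hh => by rw [(Finset.mem_filter.1 hh).2]

lemma SPofferLe.scaleS {P : Set M.K} {v : Fin m → ℝ} {a : M.K → ℝ} (ha : M.SPofferLe P v a)
    (hlam : ∀ i, 0 ≤ lam i) : M.SPofferLe P (lam * v) (M.scaleS lam a) := by
  refine ⟨⟨ha.1.1.scaleS hlam, fun h hh => ?_⟩, ?_⟩
  · simp [ExchangeMechanism.scaleS, ha.1.2 h hh]
  rw [agg_scaleS]
  exact fun i => mul_le_mul_of_nonneg_left (ha.2 i) (hlam i)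

lemma Invariant.ret_scaleS (hI : M.Invariant) (hlam : ∀ i, 0 < lam i) {x y : M.K → ℝ}
    (hxy : M.Valid 2 ![x, y]) :
    M.ret (M.scaleS lam x) (M.scaleS lam y) = lam * M.ret x y := by
  have h := congrFun (hI 2 _ lam hlam hxy) 0
  have e : (fun k => M.scaleS lam (![x, y] k)) = ![M.scaleS lam x, M.scaleS lam y] := by
    funext k
    fin_cases k <;> rfl
  rwa [e] at h

lemma Invariant.nu_scaleS (hI : M.Invariant) (hlam : ∀ i, 0 < lam i) {a B : M.K → ℝ}
    (ha : M.Nonneg a) (hB : M.Pos B) (haB : a ≤ B) :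
    M.nu (M.scaleS lam a) (M.scaleS lam B) = lam * M.nu a B := by
  have hv : M.Valid 2 ![a, B - a] :=
    valid_two ha (fun h => sub_nonneg.2 (haB h)) (by rwa [add_sub_cancel])
  rw [nu, trade, ← scaleS_sub, hI.ret_scaleS hlam hv, agg_scaleS, nu, trade, mul_sub]

lemma nu'_scaleS (hI : M.Invariant) {nu' : (M.K → ℝ) → (M.K → ℝ) → Fin m → ℝ}
    (hext : M.IsNuExtension nu') (hlam : ∀ i, 0 < lam i) {a b : M.K → ℝ}
    (ha : M.Nonneg a) (hb : M.Pos b) :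
    nu' (M.scaleS lam a) (M.scaleS lam b) = lam * nu' a b := by
  obtain ⟨s, hs, hab⟩ := exists_le_smul ha hb
  have hlam' : ∀ i, 0 ≤ lam i := fun i => (hlam i).le
  rw [hext.eq_nu_smul ha hb hs hab, hext.eq_nu_smul (ha.scaleS hlam') (hb.scaleS hlam) hs
    (by rw [smul_scaleS]; exact scaleS_mono hlam' hab), smul_scaleS,
    hI.nu_scaleS hlam ha (hb.smul hs) hab]

end scaleS

lemma IsPureIJIndex.target_unique {i j i' j' : Fin m} {h : M.K}
    (hp : M.IsPureIJIndex i j h) (hp' : M.IsPureIJIndex i' j' h) : j = j' := by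
  obtain ⟨⟨-, a, ha, hj⟩, -⟩ := hp
  by_contra hne
  exact hj.ne' (hp'.2 a ha j hne)

/-- Invariance with the constant factor `t` reduces the offer `t e_h` to `e_h`, where purity
applies; Non-dissipation then forces the only possible positive component. -/
lemma IsPureIJIndex.trade_single (hI : M.Invariant) (hND : M.NonDissipative) {i j : Fin m}
    {h : M.K} (hp : M.IsPureIJIndex i j h) {t : ℝ} (ht : 0 < t) {B : M.K → ℝ}
    (hB : M.Pos B) (htB : t ≤ B h) :
    (∀ l, l ≠ j → M.trade (Pi.single h t) B l = 0) ∧ 0 < M.trade (Pi.single h t) B j := by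
  set d := B - Pi.single h t with hd_def
  have hsingle : Pi.single h t = t • M.unit h := by simp [unit, ← Pi.single_smul']
  have hd : M.Nonneg d := fun g => sub_nonneg.2 <| by
    by_cases hg : g = h
    · subst hg; simpa using htB
    · simpa [Pi.single_apply, hg] using (hB g).le
  have hvalid : M.Valid 2 ![Pi.single h t, d] :=
    valid_two (nonneg_single h ht.le) hd (by rwa [add_sub_cancel])
  have hzero : ∀ l, l ≠ j → M.trade (Pi.single h t) B l = 0 := by
    intro l hl
    have hd' : d = t • (t⁻¹ • d) := by rw [smul_smul, mul_inv_cancel₀ ht.ne', one_smul]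
    have hunit : M.unit h + t⁻¹ • d = t⁻¹ • B := by
      rw [hd_def, smul_sub, hsingle, smul_smul, inv_mul_cancel₀ ht.ne', one_smul,
        add_sub_cancel]
    have hv' : M.Valid 2 ![M.unit h, t⁻¹ • d] :=
      valid_two (nonneg_single h zero_le_one) (fun g => mul_nonneg (inv_nonneg.2 ht.le) (hd g))
        (by rw [hunit]; exact hB.smul (inv_pos.2 ht))
    have hscale := hI.ret_scaleS (lam := fun _ => t) (fun _ => ht) hv'
    change M.ret (Pi.single h t) d l = 0
    rw [hsingle, hd']
    change M.ret (M.scaleS (fun _ => t) (M.unit h)) (M.scaleS (fun _ => t) (t⁻¹ • d)) l = 0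
    rw [hscale, Pi.mul_apply, hp.2 _ hv' l hl, mul_zero]
  refine ⟨hzero, ?_⟩
  obtain ⟨l, hl⟩ : ∃ l, 0 < M.trade (Pi.single h t) B l := by
    rcases hND 2 _ hvalid 0 with heq | ⟨l, hl⟩
    · exact ⟨M.ind h, by rw [trade, ret, heq]; simpa [agg_single_self] using ht⟩
    · exact ⟨l, (agg_nonneg (nonneg_single h ht.le) l).trans_lt hl⟩
  by_cases hlj : l = j
  · exact hlj ▸ hl
  · exact absurd (hzero l hlj) hl.ne'

section sign

variable {nu' : (M.K → ℝ) → (M.K → ℝ) → Fin m → ℝ} {P : Set M.K}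

lemma trade_single_nonneg_and_pos_iff (hI : M.Invariant) (hND : M.NonDissipative)
    (hext : M.IsNuExtension nu') (hP : ∀ h ∈ P, ∃ i j, M.IsPureIJIndex i j h)
    {a B : M.K → ℝ} (ha : M.SPoffer P a) (hB : M.Pos B) (haB : a ≤ B) (h : M.K) (l : Fin m) :
    0 ≤ M.trade (Pi.single h (a h)) B l ∧
      (0 < M.trade (Pi.single h (a h)) B l ↔ 0 < a h ∧ ∃ i, M.IsPureIJIndex i l h) := by
  rcases (ha.1 h).eq_or_lt with h0 | hpos
  · simp [← h0, hext.trade_zero hB]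
  obtain ⟨i, j, hp⟩ := hP h (by_contra fun hh => hpos.ne' (ha.2 h hh))
  obtain ⟨hzero, hj⟩ := hp.trade_single hI hND hpos hB (haB h)
  by_cases hlj : l = j
  · subst hlj
    exact ⟨hj.le, iff_of_true hj ⟨hpos, i, hp⟩⟩
  · rw [hzero l hlj]
    exact ⟨le_rfl, iff_of_false (lt_irrefl 0)
      fun ⟨_, _, hp'⟩ => hlj (hp.target_unique hp').symm⟩

lemma trade_nonneg_and_pos_iff (hA : M.Anonymous) (hAg : M.Aggregative) (hI : M.Invariant)
    (hND : M.NonDissipative) (hext : M.IsNuExtension nu')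
    (hP : ∀ h ∈ P, ∃ i j, M.IsPureIJIndex i j h)
    {a B : M.K → ℝ} (ha : M.SPoffer P a) (hB : M.Pos B) (haB : a ≤ B) (l : Fin m) :
    0 ≤ M.trade a B l ∧
      (0 < M.trade a B l ↔ ∃ h, 0 < a h ∧ ∃ i, M.IsPureIJIndex i l h) := by
  have hterm := trade_single_nonneg_and_pos_iff hI hND hext hP ha hB haB
  rw [trade_eq_sum_single hA hAg hext ha.1 hB haB, Finset.sum_apply,
    Finset.sum_pos_iff_of_nonneg fun h _ => (hterm h l).1]
  exact ⟨Finset.sum_nonneg fun h _ => (hterm h l).1, by simp [hterm]⟩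

lemma add_nu'_nonneg_and_pos_iff (hA : M.Anonymous) (hAg : M.Aggregative) (hI : M.Invariant)
    (hND : M.NonDissipative) (hext : M.IsNuExtension nu')
    (hP : ∀ h ∈ P, ∃ i j, M.IsPureIJIndex i j h)
    {a : M.K → ℝ} {v : Fin m → ℝ} (ha : M.SPofferLe P v a) {b : M.K → ℝ} (hb : M.Pos b)
    (l : Fin m) :
    0 ≤ (v + nu' a b) l ∧
      (0 < (v + nu' a b) l ↔
        M.agg a l < v l ∨ ∃ h, 0 < a h ∧ ∃ i, M.IsPureIJIndex i l h) := by
  obtain ⟨s, hs, hab⟩ := exists_le_smul ha.1.1 hb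
  obtain ⟨htrade, hpos⟩ :=
    trade_nonneg_and_pos_iff hA hAg hI hND hext hP ha.1 (hb.smul hs) hab l
  have hval : (v + nu' a b) l = (v l - M.agg a l) + M.trade a (s • b) l := by
    rw [Pi.add_apply, hext.eq_nu_smul ha.1.1 hb hs hab, nu, Pi.sub_apply]
    ring
  have hsurplus := ha.2 l
  rw [hval, ← hpos]
  refine ⟨by linarith, fun hlt => ?_, fun hor => ?_⟩
  · by_contra! hc
    linarith [hc.1, hc.2]
  · rcases hor with hlt | hlt <;> linarith

lemma sameSign_add_nu' (hA : M.Anonymous) (hAg : M.Aggregative) (hI : M.Invariant)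
    (hND : M.NonDissipative) (hext : M.IsNuExtension nu')
    (hP : ∀ h ∈ P, ∃ i j, M.IsPureIJIndex i j h)
    {a : M.K → ℝ} {v : Fin m → ℝ} (ha : M.SPofferLe P v a) {b b' : M.K → ℝ}
    (hb : M.Pos b) (hb' : M.Pos b') : SameSign (v + nu' a b) (v + nu' a b') :=
  have hsign := fun c (hc : M.Pos c) => add_nu'_nonneg_and_pos_iff hA hAg hI hND hext hP ha hc
  SameSign.of_nonneg (fun l => (hsign b hb l).1) (fun l => (hsign b' hb' l).1)
    fun l => (hsign b hb l).2.trans (hsign b' hb' l).2.symm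

lemma exists_spofferLe_sameSign_of_sameSign (hA : M.Anonymous) (hAg : M.Aggregative)
    (hI : M.Invariant) (hND : M.NonDissipative) (hext : M.IsNuExtension nu')
    (hP : ∀ h ∈ P, ∃ i j, M.IsPureIJIndex i j h)
    {a : M.K → ℝ} {v w : Fin m → ℝ} (ha : M.SPofferLe P v a)
    (hw : ∀ b, M.Pos b → SameSign (v + nu' a b) w) {u : Fin m → ℝ} (hu : SameSign u v) :
    ∃ a', M.SPofferLe P u a' ∧ ∀ b, M.Pos b → SameSign (u + nu' a' b) w := by
  obtain ⟨lam, hlam, rfl⟩ := hu.exists_pos_mul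
  have hone : M.Pos 1 := fun _ => one_pos
  have ha' := ha.scaleS fun i => (hlam i).le
  have hscaled : lam * v + nu' (M.scaleS lam a) (M.scaleS lam 1) = lam * (v + nu' a 1) := by
    rw [nu'_scaleS hI hext hlam ha.1.1 hone, mul_add]
  refine ⟨M.scaleS lam a, ha', fun b hb => ?_⟩
  refine (sameSign_add_nu' hA hAg hI hND hext hP ha' hb (hone.scaleS hlam)).trans ?_
  rw [hscaled]
  exact (SameSign.mul_left hlam _).trans (hw 1 hone)

end sign

end ExchangeMechanism

theorem sign_conversion_tfae_general {m : ℕ} (M : ExchangeMechanism m)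
    (nu' : (M.K → ℝ) → (M.K → ℝ) → Fin m → ℝ) (hM : M.MemM nu')
    (P : Set M.K) (hP : M.IsPureSelection P)
    (v w : Fin m → ℝ) :
    ((∃ a, M.SPofferLe P v a ∧ ∃ b, M.Pos b ∧ SameSign (v + nu' a b) w) ↔
      (∃ a, M.SPofferLe P v a ∧ ∀ b, M.Pos b → SameSign (v + nu' a b) w)) ∧
    ((∃ a, M.SPofferLe P v a ∧ ∀ b, M.Pos b → SameSign (v + nu' a b) w) ↔
      (∀ u, SameSign u v →
        ∃ a, M.SPofferLe P u a ∧ ∀ b, M.Pos b → SameSign (u + nu' a b) w)) := by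
  obtain ⟨-, hA, hAg, hI, hND, -, hext, -⟩ := hM
  have hone : M.Pos 1 := fun _ => one_pos
  refine ⟨⟨fun ⟨a, ha, b₀, hb₀, hw⟩ => ⟨a, ha, fun b hb => ?_⟩,
      fun ⟨a, ha, hw⟩ => ⟨a, ha, 1, hone, hw 1 hone⟩⟩,
    fun ⟨a, ha, hw⟩ u hu => ?_, fun h => h v (SameSign.refl v)⟩
  · exact (ExchangeMechanism.sameSign_add_nu' hA hAg hI hND hext hP.1 ha hb hb₀).trans hw
  · exact ExchangeMechanism.exists_spofferLe_sameSign_of_sameSign hA hAg hI hND hext hP.1 ha hw hu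

/-- Lemma on sign conversions.  Let `M ∈ 𝔐(m)` with extended net-trade
function `ν` and let `v, w ∈ ℝ₊^m`.  The following are equivalent:
(1) there is `a ∈ S_P(v)` with `v + ν(a,b) ∈ ⟨w⟩` for SOME `b ∈ S₊`;
(2) there is `a ∈ S_P(v)` with `v + ν(a,b) ∈ ⟨w⟩` for ALL `b ∈ S₊`;
(3) for each `u ∈ ⟨v⟩` there is `a ∈ S_P(u)` with `u + ν(a,b) ∈ ⟨w⟩` for all `b ∈ S₊`. -/
theorem sign_conversion_tfae {m : ℕ} (M : ExchangeMechanism m)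
    (nu' : (M.K → ℝ) → (M.K → ℝ) → Fin m → ℝ) (hM : M.MemM nu')
    (P : Set M.K) (hP : M.IsPureSelection P)
    (v w : Fin m → ℝ) (hv : ∀ i, 0 ≤ v i) (hw : ∀ i, 0 ≤ w i) :
    ((∃ a, M.SPofferLe P v a ∧ ∃ b, M.Pos b ∧ SameSign (v + nu' a b) w) ↔
      (∃ a, M.SPofferLe P v a ∧ ∀ b, M.Pos b → SameSign (v + nu' a b) w)) ∧
    ((∃ a, M.SPofferLe P v a ∧ ∀ b, M.Pos b → SameSign (v + nu' a b) w) ↔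
      (∀ u, SameSign u v →
        ∃ a, M.SPofferLe P u a ∧ ∀ b, M.Pos b → SameSign (u + nu' a b) w)) :=
  sign_conversion_tfae_general M nu' hM P hP v w
end

section
/- Uniqueness of exchange ratios: Let M ∈ 𝔐(m), b ∈ S₊, and i ≠ j. If a′ and a″ achieve ij-exchange ratios α′ and α″ at b — that is, ν(a′,b) = −e_i + α′·e_j and ν(a″,b) = −e_i + α″·e_j with all other components zero and α′, α″ > 0 — then α′ = α″. -/
open Finset

/-!
Put both offers into one market. Choose `s` with `a', a'' ≤ s • b` and let three traders offer
`a'`, `d = s • b - a''` and `e = s • b - a' + a''`, so that the market state is `(2 * s) • b`.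
By Aggregation and Anonymity the first two traders trade as in two-trader markets; by
homogeneity of degree 0 their net trades are `ν(a', b)` and `ν(d, s • b)`, and the latter is
`-ν(a'', b)` by conservation in the market `{a'', d}`. Conservation then leaves the third trader
the net trade `ν(a'', b) - ν(a', b) = (α'' - α') • e_j`, which Non-dissipation forces to be zero
or to have a positive component. Hence `α' ≤ α''`, and equality by symmetry.
-/

namespace ExchangeMechanism

variable {m : ℕ} {M : ExchangeMechanism m}

lemma exists_pos_le_smul (a : M.K → ℝ) {b : M.K → ℝ} (hb : M.Pos b) :
    ∃ s : ℝ, 0 < s ∧ a ≤ s • b := by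
  obtain ⟨s, hs⟩ := Finite.exists_le fun h => a h / b h
  refine ⟨max s 1, by positivity, fun h => ?_⟩
  rw [Pi.smul_apply, smul_eq_mul, ← div_le_iff₀ (hb h)]
  exact (hs h).trans (le_max_left s 1)

lemma IsNuExtension.nu_smul_eq {nu' : (M.K → ℝ) → (M.K → ℝ) → Fin m → ℝ}
    (hext : M.IsNuExtension nu') {a b : M.K → ℝ} (ha : M.Nonneg a) (hb : M.Pos b) {s : ℝ}
    (hs : 0 < s) (hab : a ≤ s • b) : M.nu a (s • b) = nu' a b := by
  rw [← hext.2.2 a b s ha hb hs]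
  exact (hext.1 a _ ha (fun h => mul_pos hs (hb h)) hab).symm

lemma valid_two_s8 {a c : M.K → ℝ} (ha : M.Nonneg a) (hc : M.Nonneg c) (hac : M.Pos (a + c)) :
    M.Valid 2 ![a, c] :=
  ⟨Fin.forall_fin_two.2 ⟨ha, hc⟩, by simpa [Fin.sum_univ_two] using hac⟩

lemma valid_three_s8 {a₀ a₁ a₂ : M.K → ℝ} (h₀ : M.Nonneg a₀) (h₁ : M.Nonneg a₁)
    (h₂ : M.Nonneg a₂) (hpos : M.Pos (a₀ + a₁ + a₂)) : M.Valid 3 ![a₀, a₁, a₂] :=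
  ⟨fun k => by fin_cases k <;> assumption, by simpa [Fin.sum_univ_three] using hpos⟩

lemma Anonymous.rho_swap (hA : M.Anonymous) {n : ℕ} {a : Fin n → M.K → ℝ} (hv : M.Valid n a)
    (k l : Fin n) : M.rho n (a ∘ Equiv.swap k l) k = M.rho n a l := by
  rw [hA n a _ hv, Function.comp_apply, Equiv.swap_apply_left]

lemma ret_add_ret_swap (hC : M.Conserves) (hA : M.Anonymous) {a c : M.K → ℝ}
    (hv : M.Valid 2 ![a, c]) : M.ret a c + M.ret c a = M.agg a + M.agg c := by
  have hswap : ![a, c] ∘ Equiv.swap 0 1 = ![c, a] := by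
    funext k; fin_cases k <;> rfl
  have hcons := hC 2 _ hv
  simp only [Fin.sum_univ_two] at hcons
  rw [ret, ret, ← hswap, hA.rho_swap hv, hcons]
  rfl

lemma nu_add_nu_sub_eq_zero (hC : M.Conserves) (hA : M.Anonymous) {a b : M.K → ℝ}
    (ha : M.Nonneg a) (hb : M.Pos b) (hab : a ≤ b) : M.nu a b + M.nu (b - a) b = 0 := by
  have hv : M.Valid 2 ![a, b - a] :=
    valid_two_s8 ha (fun h => sub_nonneg.2 (hab h)) (by rwa [add_sub_cancel])
  rw [nu, nu, trade, trade, sub_sub_cancel, ← sub_eq_zero.2 (ret_add_ret_swap hC hA hv)]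
  abel

lemma Aggregative.rho_three_zero (hAg : M.Aggregative) {a₀ a₁ a₂ : M.K → ℝ}
    (hv : M.Valid 3 ![a₀, a₁, a₂]) : M.rho 3 ![a₀, a₁, a₂] 0 = M.ret a₀ (a₁ + a₂) := by
  have h := congrFun (hAg 1 _ hv) 0
  have hmerge : (Fin.snoc (fun k : Fin 1 => ![a₀, a₁, a₂] k.castSucc.castSucc)
      (![a₀, a₁, a₂] (Fin.last 1).castSucc + ![a₀, a₁, a₂] (Fin.last 2)) : Fin 2 → M.K → ℝ) =
      ![a₀, a₁ + a₂] := by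
    funext k; fin_cases k <;> rfl
  rw [hmerge] at h
  exact h.symm

lemma rho_three_one (hA : M.Anonymous) (hAg : M.Aggregative) {a₀ a₁ a₂ : M.K → ℝ}
    (hv : M.Valid 3 ![a₀, a₁, a₂]) : M.rho 3 ![a₀, a₁, a₂] 1 = M.ret a₁ (a₀ + a₂) := by
  have hv' : M.Valid 3 ![a₁, a₀, a₂] :=
    valid_three_s8 (hv.1 1) (hv.1 0) (hv.1 2) <| by
      simpa [Fin.sum_univ_three, add_comm a₀ a₁] using hv.2
  have hswap : ![a₁, a₀, a₂] ∘ Equiv.swap 1 0 = ![a₀, a₁, a₂] := by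
    funext k; fin_cases k <;> rfl
  rw [← hswap, hA.rho_swap hv', hAg.rho_three_zero hv']

lemma rho_three_two_sub_agg (hC : M.Conserves) (hA : M.Anonymous) (hAg : M.Aggregative)
    {a₀ a₁ a₂ : M.K → ℝ} (hv : M.Valid 3 ![a₀, a₁, a₂]) :
    M.rho 3 ![a₀, a₁, a₂] 2 - M.agg a₂ =
      -(M.nu a₀ (a₀ + a₁ + a₂) + M.nu a₁ (a₀ + a₁ + a₂)) := by
  have hcons := hC 3 _ hv
  simp only [Fin.sum_univ_three, Matrix.cons_val_zero, Matrix.cons_val_one, Matrix.cons_val_two,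
    Matrix.head_cons, Matrix.tail_cons] at hcons
  rw [hAg.rho_three_zero hv, rho_three_one hA hAg hv] at hcons
  have h₀ : a₀ + a₁ + a₂ - a₀ = a₁ + a₂ := by abel
  have h₁ : a₀ + a₁ + a₂ - a₁ = a₀ + a₂ := by abel
  rw [nu, nu, trade, trade, h₀, h₁]
  linear_combination hcons

theorem nu_sub_nu_eq_zero_or_exists_pos (hC : M.Conserves) (hA : M.Anonymous)
    (hAg : M.Aggregative) (hND : M.NonDissipative)
    {nu' : (M.K → ℝ) → (M.K → ℝ) → Fin m → ℝ} (hext : M.IsNuExtension nu')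
    {a₁ a₂ b : M.K → ℝ} (ha₁ : M.Nonneg a₁) (ha₂ : M.Nonneg a₂) (hb : M.Pos b) :
    nu' a₂ b - nu' a₁ b = 0 ∨ ∃ k, 0 < (nu' a₂ b - nu' a₁ b) k := by
  obtain ⟨s, hs, hle⟩ := exists_pos_le_smul (a₁ ⊔ a₂) hb
  have hle₁ : a₁ ≤ s • b := le_sup_left.trans hle
  have hle₂ : a₂ ≤ s • b := le_sup_right.trans hle
  have hsb : s • b ≤ (2 * s) • b := fun h => by
    simp only [Pi.smul_apply, smul_eq_mul]; nlinarith [hb h]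
  set d := s • b - a₂
  set e := s • b - a₁ + a₂
  have hd : M.Nonneg d := fun h => sub_nonneg.2 (hle₂ h)
  have hd_le : d ≤ s • b := sub_le_self _ ha₂
  have he : M.Nonneg e := fun h => add_nonneg (sub_nonneg.2 (hle₁ h)) (ha₂ h)
  have hsum : a₁ + d + e = (2 * s) • b := by simp only [d, e]; module
  have hB : M.Pos ((2 * s) • b) := fun h => mul_pos (by positivity) (hb h)
  have hv := valid_three_s8 ha₁ hd he (hsum ▸ hB)
  have hnu_d : nu' d b = -nu' a₂ b := by
    rw [← hext.nu_smul_eq hd hb hs hd_le, ← hext.nu_smul_eq ha₂ hb hs hle₂]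
    exact eq_neg_of_add_eq_zero_right <|
      nu_add_nu_sub_eq_zero hC hA ha₂ (fun h => mul_pos hs (hb h)) hle₂
  have hnet : nu' a₂ b - nu' a₁ b = M.rho 3 ![a₁, d, e] 2 - M.agg e := by
    rw [rho_three_two_sub_agg hC hA hAg hv, hsum,
      hext.nu_smul_eq ha₁ hb (by positivity) (hle₁.trans hsb),
      hext.nu_smul_eq hd hb (by positivity) (hd_le.trans hsb), hnu_d]
    abel
  rw [hnet]
  rcases hND 3 _ hv 2 with h | ⟨k, hk⟩
  · exact Or.inl (sub_eq_zero.2 h)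
  · exact Or.inr ⟨k, sub_pos.2 hk⟩

end ExchangeMechanism

lemma nonneg_of_smul_single_eq_zero_or_exists_pos {ι : Type*} [DecidableEq ι] {j : ι} {c : ℝ}
    (h : c • (Pi.single j 1 : ι → ℝ) = 0 ∨ ∃ k, 0 < (c • (Pi.single j 1 : ι → ℝ)) k) :
    0 ≤ c := by
  rw [← Pi.single_smul', smul_eq_mul, mul_one] at h
  rcases h with h | ⟨k, hk⟩
  · exact (Pi.single_eq_zero_iff.1 h).ge
  · obtain rfl | hkj := eq_or_ne k j
    · simpa using hk.le
    · simp [Pi.single_eq_of_ne hkj] at hk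

theorem exchange_ratio_unique_general {m : ℕ} (M : ExchangeMechanism m)
    (nu' : (M.K → ℝ) → (M.K → ℝ) → Fin m → ℝ) (hM : M.MemM nu')
    (b : M.K → ℝ) (hb : M.Pos b) (i j : Fin m)
    (a' a'' : M.K → ℝ) (ha' : M.Nonneg a') (ha'' : M.Nonneg a'')
    (α' α'' : ℝ)
    (hnu' : nu' a' b = (-1 : ℝ) • (Pi.single i 1 : Fin m → ℝ) + α' • (Pi.single j 1 : Fin m → ℝ))
    (hnu'' : nu' a'' b = (-1 : ℝ) • (Pi.single i 1 : Fin m → ℝ) + α'' • (Pi.single j 1 : Fin m → ℝ)) :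
    α' = α'' := by
  obtain ⟨hC, hA, hAg, -, hND, -, hext, -⟩ := hM
  have ratio_le : ∀ {a₁ a₂ : M.K → ℝ} {α₁ α₂ : ℝ}, M.Nonneg a₁ → M.Nonneg a₂ →
      nu' a₁ b = (-1 : ℝ) • (Pi.single i 1 : Fin m → ℝ) + α₁ • (Pi.single j 1 : Fin m → ℝ) →
      nu' a₂ b = (-1 : ℝ) • (Pi.single i 1 : Fin m → ℝ) + α₂ • (Pi.single j 1 : Fin m → ℝ) →
      α₁ ≤ α₂ := by
    intro a₁ a₂ α₁ α₂ ha₁ ha₂ h₁ h₂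
    have hdiff : nu' a₂ b - nu' a₁ b = (α₂ - α₁) • (Pi.single j 1 : Fin m → ℝ) := by
      rw [h₁, h₂]; module
    have h := ExchangeMechanism.nu_sub_nu_eq_zero_or_exists_pos hC hA hAg hND hext ha₁ ha₂ hb
    rw [hdiff] at h
    exact sub_nonneg.1 (nonneg_of_smul_single_eq_zero_or_exists_pos h)
  exact le_antisymm (ratio_le ha' ha'' hnu' hnu'') (ratio_le ha'' ha' hnu'' hnu')

/-- Uniqueness of exchange ratios.  Let `M ∈ 𝔐(m)`, `b ∈ S₊`, and
`i ≠ j`.  If `a′` and `a″` achieve `ij`-exchange ratios `α′` and `α″` at `b` — that is,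
`ν(a′,b) = −e_i + α′·e_j` and `ν(a″,b) = −e_i + α″·e_j` with all other components zero and
`α′, α″ > 0` — then `α′ = α″`. -/
theorem exchange_ratio_unique {m : ℕ} (M : ExchangeMechanism m)
    (nu' : (M.K → ℝ) → (M.K → ℝ) → Fin m → ℝ) (hM : M.MemM nu')
    (b : M.K → ℝ) (hb : M.Pos b) (i j : Fin m) (hij : i ≠ j)
    (a' a'' : M.K → ℝ) (ha' : M.Nonneg a') (ha'' : M.Nonneg a'')
    (α' α'' : ℝ) (hα' : 0 < α') (hα'' : 0 < α'')
    (hnu' : nu' a' b = (-1 : ℝ) • (Pi.single i 1 : Fin m → ℝ) + α' • (Pi.single j 1 : Fin m → ℝ))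
    (hnu'' : nu' a'' b = (-1 : ℝ) • (Pi.single i 1 : Fin m → ℝ) + α'' • (Pi.single j 1 : Fin m → ℝ)) :
    α' = α'' :=
  exchange_ratio_unique_general M nu' hM b hb i j a' a'' ha' ha'' α' α'' hnu' hnu''
end
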